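/- arXiv:2103.14987 — 6 statements merged into one kernel-verified Lean document; each statement's English description precedes it below -/
import Mathlib

section
/- For a scalar z and α > 0, the set of minimizers of y ↦ (1/2)(y - z)² + α·ℓ(y), where ℓ(y) = 1 if y > 0 and 0 if y ≤ 0, equals {0} if |z - √(α/2)| < √(α/2), equals {0, z} if |z - √(α/2)| = √(α/2), and equals {z} if |z - √(α/2)| > √(α/2). -/
/-- Heaviside / 0-1 loss: 1 for positive arguments, 0 otherwise. -/
noncomputable def heaviside (t : ℝ) : ℝ := if 0 < t then 1 else 0

/-- The set of minimizers of `y ↦ (1/2)(y-z)² + α·ℓ(y)`. -/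
noncomputable def proxSet (α z : ℝ) : Set ℝ :=
  {y | ∀ t : ℝ, (1/2) * (y - z)^2 + α * heaviside y ≤ (1/2) * (t - z)^2 + α * heaviside t}

/-!
On `y ≤ 0` the objective `f y = (y - z)² / 2 + α ℓ(y)` is a parabola minimised at `min z 0`; on `y > 0`
it is at least `α ≥ f z`, with equality only at `y = z`. So `min (f 0) (f z)` is the minimum, every
minimiser is `0` or `z`, and comparing `f 0 = z² / 2` with `f z = α ℓ(z)` shows that `0` (resp. `z`) is a
minimiser iff `z (z - √(2α)) ≤ 0` (resp. `≥ 0`). This matches the statement because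
`|z - s|² - s² = z (z - 2s)` and `2 √(α/2) = √(2α)`.
-/

open Real

lemma heaviside_of_pos {t : ℝ} (ht : 0 < t) : heaviside t = 1 := if_pos ht

lemma heaviside_of_nonpos {t : ℝ} (ht : t ≤ 0) : heaviside t = 0 := if_neg ht.not_gt

lemma heaviside_nonneg (t : ℝ) : 0 ≤ heaviside t := by
  unfold heaviside; split_ifs <;> norm_num

lemma heaviside_le_one (t : ℝ) : heaviside t ≤ 1 := by
  unfold heaviside; split_ifs <;> norm_num

noncomputable def proxObjective (α z y : ℝ) : ℝ := 1 / 2 * (y - z) ^ 2 + α * heaviside y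

lemma mem_proxSet_iff_forall {α z y : ℝ} :
    y ∈ proxSet α z ↔ ∀ t, proxObjective α z y ≤ proxObjective α z t := Iff.rfl

lemma proxObjective_zero (α z : ℝ) : proxObjective α z 0 = z ^ 2 / 2 := by
  simp only [proxObjective, heaviside_of_nonpos le_rfl]; ring

lemma proxObjective_self (α z : ℝ) : proxObjective α z z = α * heaviside z := by
  simp [proxObjective]

lemma min_proxObjective_le {α : ℝ} (hα : 0 ≤ α) (z t : ℝ) :
    min (proxObjective α z 0) (proxObjective α z z) ≤ proxObjective α z t := by
  rw [proxObjective_zero, proxObjective_self]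
  rcases le_or_gt t 0 with ht | ht
  · rw [proxObjective, heaviside_of_nonpos ht]
    rcases le_or_gt z 0 with hz | hz
    · exact (min_le_right _ _).trans (by rw [heaviside_of_nonpos hz]; nlinarith [sq_nonneg (t - z)])
    · exact (min_le_left _ _).trans (by nlinarith)
  · rw [proxObjective, heaviside_of_pos ht]
    exact (min_le_right _ _).trans (by nlinarith [heaviside_le_one z, sq_nonneg (t - z)])

lemma mem_proxSet_iff {α : ℝ} (hα : 0 ≤ α) {z y : ℝ} :
    y ∈ proxSet α z ↔ proxObjective α z y ≤ proxObjective α z 0 ∧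
      proxObjective α z y ≤ proxObjective α z z := by
  rw [mem_proxSet_iff_forall, ← le_min_iff]
  exact ⟨fun h => le_min (h 0) (h z), fun h t => h.trans (min_proxObjective_le hα z t)⟩

lemma proxObjective_self_lt {α z y : ℝ} (hα : 0 ≤ α) (hy : 0 < y ∨ z ≤ 0) (hyz : y ≠ z) :
    proxObjective α z z < proxObjective α z y := by
  have hpos : 0 < (y - z) ^ 2 := by have := sub_ne_zero.mpr hyz; positivity
  rw [proxObjective_self, proxObjective]
  rcases hy with hy | hz
  · rw [heaviside_of_pos hy]
    nlinarith [heaviside_le_one z]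
  · rw [heaviside_of_nonpos hz]
    nlinarith [heaviside_nonneg y]

lemma proxObjective_zero_lt {α z y : ℝ} (hy : y < 0) (hz : 0 < z) :
    proxObjective α z 0 < proxObjective α z y := by
  rw [proxObjective_zero, proxObjective, heaviside_of_nonpos hy.le]
  nlinarith

lemma proxSet_subset_pair {α : ℝ} (hα : 0 ≤ α) (z : ℝ) : proxSet α z ⊆ {0, z} := by
  intro y hy
  by_contra hne
  simp only [Set.mem_insert_iff, Set.mem_singleton_iff, not_or] at hne
  by_cases h : 0 < y ∨ z ≤ 0
  · exact (proxObjective_self_lt hα h hne.2).not_ge (hy z)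
  · push Not at h
    exact (proxObjective_zero_lt (lt_of_le_of_ne h.1 hne.1) h.2).not_ge (hy 0)

lemma mem_proxSet_iff_eq_zero_or_eq_self {α : ℝ} (hα : 0 ≤ α) {z y : ℝ} :
    y ∈ proxSet α z ↔ (y = 0 ∧ 0 ∈ proxSet α z) ∨ (y = z ∧ z ∈ proxSet α z) := by
  refine ⟨fun hy => ?_, ?_⟩
  · rcases proxSet_subset_pair hα z hy with rfl | rfl
    exacts [.inl ⟨rfl, hy⟩, .inr ⟨rfl, hy⟩]
  · rintro (⟨rfl, h⟩ | ⟨rfl, h⟩) <;> exact h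

lemma zero_mem_proxSet_iff {α : ℝ} (hα : 0 ≤ α) {z : ℝ} :
    0 ∈ proxSet α z ↔ z * (z - √(2 * α)) ≤ 0 := by
  rw [mem_proxSet_iff hα, proxObjective_zero, proxObjective_self, and_iff_right le_rfl]
  have hc := sqrt_nonneg (2 * α)
  have hc2 := sq_sqrt (by positivity : 0 ≤ 2 * α)
  rcases le_or_gt z 0 with hz | hz
  · rw [heaviside_of_nonpos hz]
    constructor <;> intro h <;> nlinarith
  · rw [heaviside_of_pos hz]
    constructor <;> intro h <;> nlinarith

lemma self_mem_proxSet_iff {α : ℝ} (hα : 0 ≤ α) {z : ℝ} :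
    z ∈ proxSet α z ↔ 0 ≤ z * (z - √(2 * α)) := by
  rw [mem_proxSet_iff hα, proxObjective_zero, proxObjective_self, and_iff_left le_rfl]
  have hc := sqrt_nonneg (2 * α)
  have hc2 := sq_sqrt (by positivity : 0 ≤ 2 * α)
  rcases le_or_gt z 0 with hz | hz
  · rw [heaviside_of_nonpos hz]
    constructor <;> intro h <;> nlinarith
  · rw [heaviside_of_pos hz]
    constructor <;> intro h <;> nlinarith

lemma sq_sub_sub_sq_self (z s : ℝ) : (z - s) ^ 2 - s ^ 2 = z * (z - 2 * s) := by ring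

lemma abs_sub_lt_self_iff {s : ℝ} (hs : 0 ≤ s) (z : ℝ) : |z - s| < s ↔ z * (z - 2 * s) < 0 := by
  rw [← sq_lt_sq₀ (abs_nonneg _) hs, sq_abs, ← sub_neg, sq_sub_sub_sq_self]

lemma abs_sub_eq_self_iff {s : ℝ} (hs : 0 ≤ s) (z : ℝ) : |z - s| = s ↔ z * (z - 2 * s) = 0 := by
  rw [← sq_eq_sq₀ (abs_nonneg _) hs, sq_abs, ← sub_eq_zero, sq_sub_sub_sq_self]

lemma lt_abs_sub_self_iff {s : ℝ} (hs : 0 ≤ s) (z : ℝ) : s < |z - s| ↔ 0 < z * (z - 2 * s) := by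
  rw [← sq_lt_sq₀ hs (abs_nonneg _), sq_abs, ← sub_pos, sq_sub_sub_sq_self]

theorem stmt_0 (α z : ℝ) (hα : 0 < α) :
    (|z - Real.sqrt (α/2)| < Real.sqrt (α/2) → proxSet α z = {0}) ∧
    (|z - Real.sqrt (α/2)| = Real.sqrt (α/2) → proxSet α z = {0, z}) ∧
    (|z - Real.sqrt (α/2)| > Real.sqrt (α/2) → proxSet α z = {z}) := by
  have hs : 0 ≤ √(α / 2) := sqrt_nonneg _
  have hc : √(2 * α) = 2 * √(α / 2) := by
    rw [show 2 * α = 2 ^ 2 * (α / 2) by ring, sqrt_mul (by norm_num), sqrt_sq zero_le_two]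
  refine ⟨fun h => ?_, fun h => ?_, fun h => ?_⟩ <;> ext y <;>
    rw [mem_proxSet_iff_eq_zero_or_eq_self hα.le, zero_mem_proxSet_iff hα.le,
      self_mem_proxSet_iff hα.le, hc]
  · rw [abs_sub_lt_self_iff hs] at h
    simp only [h.le, h.not_ge, and_true, and_false, or_false, Set.mem_singleton_iff]
  · rw [abs_sub_eq_self_iff hs] at h
    simp only [h, le_refl, and_true, Set.mem_insert_iff, Set.mem_singleton_iff]
  · rw [gt_iff_lt, lt_abs_sub_self_iff hs] at h
    simp only [h.le, h.not_ge, and_true, and_false, false_or, Set.mem_singleton_iff]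
end

section
/- Let v ∈ ℝ^m satisfy v_i = 0 whenever y_i ≠ 0 and v_i ≥ 0 whenever y_i = 0. Then v belongs to the regular (Fréchet) subdifferential of g(z) = ‖z₊‖₀ at y, i.e., liminf over z → y, z ≠ y, of (g(z) − g(y) − ⟨v, z − y⟩)/‖z − y‖ is ≥ 0. -/
/-! The numerator splits into a sum over coordinates of
`1_{z_i > 0} - 1_{y_i > 0} - v_i (z_i - y_i)`, and each term is eventually nonnegative as
`z → y`: where `y_i ≠ 0` the step is locally constant and `v_i = 0`; where `y_i = 0` the step
can only jump up, by `1`, which beats `v_i z_i → 0`, and when it does not jump, `z_i ≤ 0` and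
`v_i ≥ 0` make `-v_i z_i ≥ 0`. -/

open Filter Topology

theorem Real.liminf_nonneg_of_eventually_nonneg {α : Type*} {f : Filter α} {u : α → ℝ}
    (h : ∀ᶠ x in f, 0 ≤ u x) : 0 ≤ liminf u f := by
  -- no coboundedness is needed for the bound `0`: `sSup` of an unbounded set of reals is `0`
  rw [liminf_eq]
  by_cases hbdd : BddAbove {a | ∀ᶠ x in f, a ≤ u x}
  · exact le_csSup hbdd h
  · rw [Real.sSup_of_not_bddAbove hbdd]

theorem natCard_setOf_pos_eq_sum {ι : Type*} [Fintype ι] (z : ι → ℝ) :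
    (Nat.card {i : ι | 0 < z i} : ℝ) = ∑ i, if 0 < z i then 1 else 0 := by
  simp

theorem eventually_mul_sub_le_step_sub_step {a c : ℝ} (hc : a ≠ 0 → c = 0) (hc₀ : a = 0 → 0 ≤ c) :
    ∀ᶠ b in 𝓝 a, c * (b - a) ≤ (if 0 < b then 1 else 0) - (if 0 < a then 1 else 0) := by
  rcases lt_trichotomy a 0 with ha | rfl | ha
  · filter_upwards [eventually_lt_nhds ha] with b hb
    simp [hc ha.ne, hb.not_gt, ha.not_gt]
  · have hcb : Tendsto (fun b => c * b) (𝓝 0) (𝓝 0) := by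
      simpa using (continuous_const_mul c).tendsto 0
    filter_upwards [hcb.eventually (eventually_lt_nhds one_pos)] with b hb
    simp only [lt_irrefl, if_false, sub_zero]
    split_ifs with hb₀
    · exact hb.le
    · exact mul_nonpos_of_nonneg_of_nonpos (hc₀ rfl) (not_lt.mp hb₀)
  · filter_upwards [eventually_gt_nhds ha] with b hb
    simp [hc ha.ne', hb, ha]

theorem eventually_inner_sub_le_card_sub_card {ι : Type*} [Fintype ι]
    {y v : EuclideanSpace ℝ ι} (hv : ∀ i, y i ≠ 0 → v i = 0) (hv₀ : ∀ i, y i = 0 → 0 ≤ v i) :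
    ∀ᶠ z in 𝓝 y, inner ℝ v (z - y) ≤
      (Nat.card {i : ι | 0 < z i} : ℝ) - (Nat.card {i : ι | 0 < y i} : ℝ) := by
  have hcoord : ∀ᶠ z in 𝓝 y, ∀ i, v i * (z i - y i) ≤
      (if 0 < z i then 1 else 0) - (if 0 < y i then 1 else 0) := by
    refine eventually_all.mpr fun i => ?_
    exact ((EuclideanSpace.proj i).continuous.tendsto y).eventually
      (eventually_mul_sub_le_step_sub_step (hv i) (hv₀ i))
  filter_upwards [hcoord] with z hz
  rw [natCard_setOf_pos_eq_sum, natCard_setOf_pos_eq_sum, ← Finset.sum_sub_distrib]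
  simpa [PiLp.inner_apply, mul_comm] using Finset.sum_le_sum fun i _ => hz i

theorem stmt_3 (m : ℕ) (y v : EuclideanSpace ℝ (Fin m))
    (h1 : ∀ i, y i ≠ 0 → v i = 0) (h2 : ∀ i, y i = 0 → 0 ≤ v i) :
    0 ≤ Filter.liminf
      (fun z : EuclideanSpace ℝ (Fin m) =>
        ((Nat.card {i : Fin m | 0 < z i} : ℝ) - (Nat.card {i : Fin m | 0 < y i} : ℝ)
          - (inner ℝ v (z - y) : ℝ)) / ‖z - y‖)
      (nhdsWithin y {z | z ≠ y}) := by
  refine Real.liminf_nonneg_of_eventually_nonneg (nhdsWithin_le_nhds ?_)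
  filter_upwards [eventually_inner_sub_le_card_sub_card h1 h2] with z hz
  exact div_nonneg (sub_nonneg.mpr hz) (norm_nonneg _)
end

section
/- Conversely, if v belongs to the regular subdifferential of g(z) = ‖z₊‖₀ at y, then v_i = 0 for every i with y_i ≠ 0 and v_i ≥ 0 for every i with y_i = 0. -/
/-!
Near `y` every positive coordinate stays positive, so `g(z) ≥ g(y)` and the difference quotient
is bounded below by `-‖v‖`; the liminf is therefore at most the value of the quotient along any
curve entering `y`. Moving `y` along the `i`-th axis by a small `t` of a suitable sign does not
change `g`, and the quotient is then `-v_i · sign t`. If `y_i ≠ 0` both signs are allowed, forcing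
`v_i = 0`; if `y_i = 0` only `t < 0` is, forcing `v_i ≥ 0`.
-/

open Filter Topology

noncomputable def frechetQuotient {E : Type*} [NormedAddCommGroup E] [InnerProductSpace ℝ E]
    (g : E → ℝ) (y v z : E) : ℝ :=
  (g z - g y - inner ℝ v (z - y)) / ‖z - y‖

def IsRegularSubgradient {E : Type*} [NormedAddCommGroup E] [InnerProductSpace ℝ E]
    (g : E → ℝ) (y v : E) : Prop :=
  0 ≤ liminf (frechetQuotient g y v) (𝓝[≠] y)

theorem le_of_le_liminf_of_tendsto {α β : Type*} {f : α → ℝ} {l : Filter α} {l' : Filter β}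
    [l'.NeBot] {u : β → α} {a c : ℝ} (hf : IsBoundedUnder (· ≥ ·) l f) (h : a ≤ liminf f l)
    (hu : Tendsto u l' l) (hc : ∀ᶠ t in l', f (u t) ≤ c) : a ≤ c :=
  h.trans (liminf_le_of_frequently_le (hu.frequently hc.frequently) hf)

theorem isBoundedUnder_ge_frechetQuotient {E : Type*} [NormedAddCommGroup E]
    [InnerProductSpace ℝ E] {g : E → ℝ} {y : E} (v : E) (hg : ∀ᶠ z in 𝓝 y, g y ≤ g z) :
    IsBoundedUnder (· ≥ ·) (𝓝[≠] y) (frechetQuotient g y v) := by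
  refine ⟨-‖v‖, eventually_map.mpr ?_⟩
  filter_upwards [nhdsWithin_le_nhds hg, self_mem_nhdsWithin] with z hgz (hzy : z ≠ y)
  have hpos : 0 < ‖z - y‖ := norm_pos_iff.mpr (sub_ne_zero.mpr hzy)
  rw [ge_iff_le, frechetQuotient, le_div_iff₀ hpos]
  linarith [real_inner_le_norm v (z - y)]

theorem eventually_pos_add_iff {a : ℝ} (ha : a ≠ 0) : ∀ᶠ t in 𝓝 0, (0 < a + t ↔ 0 < a) := by
  have hcont : Tendsto (fun t : ℝ => a + t) (𝓝 0) (𝓝 a) := by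
    simpa using (continuous_const_add a).tendsto 0
  rcases ha.lt_or_gt with ha | ha
  · filter_upwards [hcont.eventually (gt_mem_nhds ha)] with t ht
    exact iff_of_false ht.not_gt ha.not_gt
  · filter_upwards [hcont.eventually (lt_mem_nhds ha)] with t ht
    exact iff_of_true ht ha

section EuclideanSpace

variable {m : ℕ}

/-- `g(z) = ‖z₊‖₀`. -/
noncomputable def posPartL0 (z : EuclideanSpace ℝ (Fin m)) : ℝ :=
  (Nat.card {i : Fin m | 0 < z i} : ℝ)

theorem eventually_posPartL0_le (y : EuclideanSpace ℝ (Fin m)) :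
    ∀ᶠ z in 𝓝 y, posPartL0 y ≤ posPartL0 z := by
  have hpos : ∀ᶠ z in 𝓝 y, ∀ j, 0 < y j → 0 < z j := by
    refine eventually_all.mpr fun j => ?_
    by_cases hj : 0 < y j
    · filter_upwards [(EuclideanSpace.proj j).continuous.continuousAt.eventually
        (lt_mem_nhds hj)] with z hz using fun _ => hz
    · exact Eventually.of_forall fun _ h => absurd h hj
  filter_upwards [hpos] with z hz
  exact Nat.cast_le.mpr (Nat.card_mono (Set.toFinite _) fun j => hz j)

theorem posPartL0_add_single {y : EuclideanSpace ℝ (Fin m)} {i : Fin m} {t : ℝ}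
    (ht : 0 < y i + t ↔ 0 < y i) : posPartL0 (y + EuclideanSpace.single i t) = posPartL0 y := by
  unfold posPartL0
  congr 3
  ext j
  rcases eq_or_ne j i with rfl | hj
  · simpa using ht
  · simp [hj]

theorem frechetQuotient_posPartL0_add_single {y : EuclideanSpace ℝ (Fin m)}
    (v : EuclideanSpace ℝ (Fin m)) {i : Fin m} {t : ℝ} (ht : 0 < y i + t ↔ 0 < y i) :
    frechetQuotient posPartL0 y v (y + EuclideanSpace.single i t) = -(v i * t) / |t| := by
  rw [frechetQuotient, posPartL0_add_single ht, add_sub_cancel_left,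
    EuclideanSpace.inner_single_right, PiLp.norm_single, Real.norm_eq_abs]
  simp [mul_comm]

theorem tendsto_add_single_nhdsNE (y : EuclideanSpace ℝ (Fin m)) (i : Fin m) :
    Tendsto (fun t : ℝ => y + EuclideanSpace.single i t) (𝓝[≠] 0) (𝓝[≠] y) := by
  refine tendsto_nhdsWithin_iff.mpr ⟨?_, ?_⟩
  · refine tendsto_iff_norm_sub_tendsto_zero.mpr ?_
    simpa using tendsto_norm_zero.mono_left (nhdsWithin_le_nhds (a := (0 : ℝ)))
  · filter_upwards [self_mem_nhdsWithin] with t (ht : t ≠ 0)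
    simpa using ht

theorem IsRegularSubgradient.nonneg_of_eventually_le_along_single
    {y v : EuclideanSpace ℝ (Fin m)} (hv : IsRegularSubgradient posPartL0 y v) {i : Fin m}
    (l : Filter ℝ) [l.NeBot] (hl : l ≤ 𝓝[≠] 0) (hsign : ∀ᶠ t in l, 0 < y i + t ↔ 0 < y i)
    {c : ℝ} (hc : ∀ᶠ t in l, -(v i * t) / |t| ≤ c) : 0 ≤ c := by
  refine le_of_le_liminf_of_tendsto (isBoundedUnder_ge_frechetQuotient v
    (eventually_posPartL0_le y)) hv ((tendsto_add_single_nhdsNE y i).mono_left hl) ?_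
  filter_upwards [hsign, hc] with t ht htc
  rwa [frechetQuotient_posPartL0_add_single v ht]

theorem IsRegularSubgradient.nonneg_apply {y v : EuclideanSpace ℝ (Fin m)}
    (hv : IsRegularSubgradient posPartL0 y v) {i : Fin m}
    (hsign : ∀ᶠ t in 𝓝[<] 0, 0 < y i + t ↔ 0 < y i) : 0 ≤ v i := by
  refine hv.nonneg_of_eventually_le_along_single (𝓝[<] 0)
    (nhdsWithin_mono _ fun t (ht : t < 0) => ht.ne) hsign ?_
  filter_upwards [self_mem_nhdsWithin] with t (ht : t < 0)
  rw [abs_of_neg ht, div_neg, neg_div, neg_neg, mul_div_cancel_right₀ _ ht.ne]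

theorem IsRegularSubgradient.nonpos_apply {y v : EuclideanSpace ℝ (Fin m)}
    (hv : IsRegularSubgradient posPartL0 y v) {i : Fin m}
    (hsign : ∀ᶠ t in 𝓝[>] 0, 0 < y i + t ↔ 0 < y i) : v i ≤ 0 := by
  have := hv.nonneg_of_eventually_le_along_single (𝓝[>] 0)
    (nhdsWithin_mono _ fun t (ht : 0 < t) => ht.ne') hsign (c := -v i) ?_
  · linarith
  filter_upwards [self_mem_nhdsWithin] with t (ht : 0 < t)
  rw [abs_of_pos ht, neg_div, mul_div_cancel_right₀ _ ht.ne']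

end EuclideanSpace

theorem stmt_4 (m : ℕ) (y v : EuclideanSpace ℝ (Fin m))
    (h : 0 ≤ Filter.liminf
      (fun z : EuclideanSpace ℝ (Fin m) =>
        ((Nat.card {i : Fin m | 0 < z i} : ℝ) - (Nat.card {i : Fin m | 0 < y i} : ℝ)
          - (inner ℝ v (z - y) : ℝ)) / ‖z - y‖)
      (nhdsWithin y {z | z ≠ y})) :
    ∀ i, (y i ≠ 0 → v i = 0) ∧ (y i = 0 → 0 ≤ v i) := by
  intro i
  have hv : IsRegularSubgradient posPartL0 y v := h
  refine ⟨fun hyi => le_antisymm ?_ ?_, fun hyi => hv.nonneg_apply ?_⟩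
  · exact hv.nonpos_apply (nhdsWithin_le_nhds (eventually_pos_add_iff hyi))
  · exact hv.nonneg_apply (nhdsWithin_le_nhds (eventually_pos_add_iff hyi))
  · filter_upwards [self_mem_nhdsWithin] with t (ht : t < 0)
    simp [hyi, ht.not_gt]
end

section
/- Let f : ℝⁿ → ℝ be convex and differentiable, A ∈ ℝ^{m×n}, b ∈ ℝ^m, λ > 0, and suppose x* satisfies: there exists z* ∈ ℝ^m with ∇f(x*) + Aᵀz* = 0, z*_i ≥ 0 whenever (Ax* + b)_i = 0, and z*_i = 0 whenever (Ax* + b)_i ≠ 0. Then x* is a local minimizer of x ↦ f(x) + λ‖(Ax + b)₊‖₀. -/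
/-! Convexity gives `f x ≥ f x* + ⟪∇f x*, x - x*⟫`, and by `∇f x* = -Aᵀz*` and complementary
slackness the right side is `f x* - ∑ zᵢ (Ax + b)ᵢ`. Near `x*` each term `zᵢ (Ax + b)ᵢ` is at most
`λ (𝟙[(Ax + b)ᵢ > 0] - 𝟙[(Ax* + b)ᵢ > 0])`: inactive constraints carry `zᵢ = 0` and positive ones
stay positive, while an active one contributes either something `≤ 0` or, when `i` newly enters the
support and pays `λ`, something smaller than `λ` by continuity. -/

open AffineMap Filter Topology RealInnerProductSpace

theorem ConvexOn.add_le_of_hasFDerivAt {E : Type*} [NormedAddCommGroup E] [NormedSpace ℝ E]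
    {s : Set E} {f : E → ℝ} {f' : E →L[ℝ] ℝ} {x y : E}
    (hf : ConvexOn ℝ s f) (hx : x ∈ s) (hy : y ∈ s) (hf' : HasFDerivAt f f' x) :
    f x + f' (y - x) ≤ f y := by
  have hline : ConvexOn ℝ (lineMap (k := ℝ) x y ⁻¹' s) (f ∘ lineMap x y) :=
    hf.comp_affineMap (lineMap x y : ℝ →ᵃ[ℝ] E)
  have hderiv : HasDerivAt (f ∘ lineMap x y) (f' (y - x)) (0 : ℝ) := by
    have hf'0 : HasFDerivAt f f' (lineMap x y (0 : ℝ)) := by simpa using hf'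
    exact hf'0.comp_hasDerivAt 0 hasDerivAt_lineMap
  have := hline.le_slope_of_hasDerivAt (by simpa) (by simpa) one_pos hderiv
  simp only [slope_def_field, Function.comp_apply, lineMap_apply_zero, lineMap_apply_one,
    sub_zero, div_one] at this
  linarith

theorem eventually_mul_le_mul_ite_sub {X : Type*} [TopologicalSpace X] {g : X → ℝ} {x₀ : X}
    (hg : ContinuousAt g x₀) {z lam : ℝ} (hlam : 0 < lam)
    (hz_nonneg : g x₀ = 0 → 0 ≤ z) (hz_zero : g x₀ ≠ 0 → z = 0) :
    ∀ᶠ x in 𝓝 x₀,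
      z * g x ≤ lam * ((if 0 < g x then 1 else 0) - (if 0 < g x₀ then 1 else 0)) := by
  rcases lt_trichotomy (g x₀) 0 with hneg | hzero | hpos
  · refine Eventually.of_forall fun x => ?_
    rw [hz_zero hneg.ne, if_neg hneg.not_gt]
    split_ifs <;> linarith
  · have hsmall : ∀ᶠ x in 𝓝 x₀, z * g x < lam :=
      (continuousAt_const.mul hg).eventually_lt continuousAt_const (by simpa [hzero])
    filter_upwards [hsmall] with x hx
    rw [if_neg hzero.not_gt]
    split_ifs with hgx
    · linarith
    · nlinarith [hz_nonneg hzero]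
  · filter_upwards [continuousAt_const.eventually_lt hg hpos] with x hx
    simp [hz_zero hpos.ne', hpos, hx]

theorem eventually_sum_mul_le_mul_card_sub {X ι : Type*} [TopologicalSpace X] [Fintype ι]
    {g : ι → X → ℝ} {x₀ : X} (hg : ∀ i, ContinuousAt (g i) x₀) {z : ι → ℝ} {lam : ℝ}
    (hlam : 0 < lam) (hz_nonneg : ∀ i, g i x₀ = 0 → 0 ≤ z i)
    (hz_zero : ∀ i, g i x₀ ≠ 0 → z i = 0) :
    ∀ᶠ x in 𝓝 x₀, ∑ i, z i * g i x ≤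
      lam * ((Nat.card {i | 0 < g i x} : ℝ) - Nat.card {i | 0 < g i x₀}) := by
  classical
  have hcard : ∀ x, (Nat.card {i | 0 < g i x} : ℝ) = ∑ i, if 0 < g i x then 1 else 0 := by
    intro x
    simp [Finset.sum_boole, Nat.card_eq_fintype_card, Fintype.card_subtype]
  filter_upwards [eventually_all.2 fun i =>
    eventually_mul_le_mul_ite_sub (hg i) hlam (hz_nonneg i) (hz_zero i)] with x hx
  calc ∑ i, z i * g i x
      ≤ ∑ i, lam * ((if 0 < g i x then 1 else 0) - (if 0 < g i x₀ then 1 else 0)) :=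
        Finset.sum_le_sum fun i _ => hx i
    _ = lam * ((Nat.card {i | 0 < g i x} : ℝ) - Nat.card {i | 0 < g i x₀}) := by
        rw [← Finset.mul_sum, Finset.sum_sub_distrib, hcard, hcard]

theorem inner_eq_neg_sum_mul_sum {ι κ : Type*} [Fintype ι] [Fintype κ]
    {w v : EuclideanSpace ℝ κ} {A : Matrix ι κ ℝ} {z : ι → ℝ}
    (hw : ∀ j, w j + ∑ i, z i * A i j = 0) :
    ⟪w, v⟫ = -∑ i, z i * ∑ j, A i j * v j := by
  have hw' : ∀ j, w j = -∑ i, z i * A i j := fun j => eq_neg_of_add_eq_zero_left (hw j)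
  simp only [PiLp.inner_apply, RCLike.inner_apply, conj_trivial, hw', Finset.mul_sum,
    Finset.sum_neg_distrib, mul_neg]
  refine congrArg Neg.neg ?_
  rw [Finset.sum_comm]
  exact Finset.sum_congr rfl fun i _ => Finset.sum_congr rfl fun j _ => by ring

theorem stmt_6 (n m : ℕ) (f : EuclideanSpace ℝ (Fin n) → ℝ)
    (hconv : ConvexOn ℝ Set.univ f) (hdiff : Differentiable ℝ f)
    (A : Matrix (Fin m) (Fin n) ℝ) (b : Fin m → ℝ) (lam : ℝ) (hlam : 0 < lam)
    (xstar : EuclideanSpace ℝ (Fin n)) (zstar : Fin m → ℝ)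
    (hgrad : ∀ j, gradient f xstar j + ∑ i, zstar i * A i j = 0)
    (hz1 : ∀ i, (∑ j, A i j * xstar j) + b i = 0 → 0 ≤ zstar i)
    (hz2 : ∀ i, (∑ j, A i j * xstar j) + b i ≠ 0 → zstar i = 0) :
    IsLocalMin
      (fun x : EuclideanSpace ℝ (Fin n) =>
        f x + lam * (Nat.card {i : Fin m | 0 < (∑ j, A i j * x j) + b i} : ℝ)) xstar := by
  set g : Fin m → EuclideanSpace ℝ (Fin n) → ℝ := fun i x => (∑ j, A i j * x j) + b i
  have hg : ∀ i, ContinuousAt (g i) xstar := fun i => by fun_prop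
  have hslack : ∑ i, zstar i * g i xstar = 0 := Finset.sum_eq_zero fun i _ => by
    by_cases h : g i xstar = 0
    · rw [h, mul_zero]
    · rw [hz2 i h, zero_mul]
  filter_upwards [eventually_sum_mul_le_mul_card_sub hg hlam hz1 hz2] with x hx
  have hfo := hconv.add_le_of_hasFDerivAt (Set.mem_univ xstar) (Set.mem_univ x)
    (hdiff xstar).hasGradientAt.hasFDerivAt
  have hinner : ⟪gradient f xstar, x - xstar⟫ = -∑ i, zstar i * (g i x - g i xstar) := by
    have hg_sub : ∀ i, g i x - g i xstar = ∑ j, A i j * (x - xstar) j := fun i => by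
      simp only [g, PiLp.sub_apply, mul_sub, Finset.sum_sub_distrib]
      ring
    simp only [inner_eq_neg_sum_mul_sum hgrad, hg_sub]
  rw [InnerProductSpace.toDual_apply_apply, hinner] at hfo
  simp only [mul_sub, Finset.sum_sub_distrib, hslack] at hfo
  linarith
end

section
/- Let f : ℝⁿ → ℝ be c_f-strongly convex and differentiable, λ > 0, and let (x*, z*) be a P-stationary point with parameter τ ≥ ‖A‖²/c_f, i.e., ∇f(x*) + Aᵀz* = 0 and Ax*+b belongs to the proximal set Prox_{τλ‖(·)₊‖₀}(Ax*+b+τz*). Then x* is a global minimizer of x ↦ f(x) + λ‖(Ax+b)₊‖₀. -/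
/-- Spectral norm (l2 operator norm) of a real matrix. -/
noncomputable def matOpNorm {m n : ℕ} (A : Matrix (Fin m) (Fin n) ℝ) : ℝ :=
  ‖LinearMap.toContinuousLinearMap (Matrix.toEuclideanLin A)‖

/-!
Test the proximal inequality at `y = Ax + b` and write `v = x - x*`. Expanding the squares gives
`τλ(‖y*₊‖₀ - ‖y₊‖₀) ≤ ½‖Av‖² - τ⟪Av, z*⟫`. Stationarity turns `-⟪Av, z*⟫ = -⟪v, Aᵀz*⟫` into
`⟪∇f(x*), v⟫`, and `τ ≥ ‖A‖²/c_f` bounds `½‖Av‖²` by `τ c_f/2 ‖v‖²`, so the right-hand side is at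
most `τ` times the strong-convexity lower bound for `f x - f x*`.
-/

open Set
open scoped InnerProduct RealInnerProductSpace

section ProxStationary

variable {E F : Type*} [NormedAddCommGroup E] [InnerProductSpace ℝ E]
  [NormedAddCommGroup F] [InnerProductSpace ℝ F]

lemma norm_sub_smul_sq_sub_norm_smul_sq (d z : F) (τ : ℝ) :
    ‖d - τ • z‖ ^ 2 - ‖τ • z‖ ^ 2 = ‖d‖ ^ 2 - 2 * τ * ⟪d, z⟫ := by
  rw [norm_sub_sq_real, real_inner_smul_right]
  ring

theorem isMinOn_add_comp_of_pStationary [CompleteSpace E] [CompleteSpace F]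
    (f : E → ℝ) (h : F → ℝ) (L : E →L[ℝ] F) (b : F) {c τ : ℝ} {xs g : E} {z : F}
    (hτ0 : 0 < τ) (hτ : ‖L‖ ^ 2 ≤ τ * c)
    (hsc : ∀ x, f xs + ⟪g, x - xs⟫ + c / 2 * ‖x - xs‖ ^ 2 ≤ f x)
    (hstat : g + (L†) z = 0)
    (hprox : IsMinOn (fun y => 1 / 2 * ‖y - (L xs + b + τ • z)‖ ^ 2 + τ * h y) univ (L xs + b)) :
    IsMinOn (fun x => f x + h (L x + b)) univ xs := by
  refine isMinOn_univ_iff.mpr fun x => ?_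
  set v := x - xs
  have hprox_x := isMinOn_univ_iff.mp hprox (L x + b)
  have hLv : L x + b - (L xs + b + τ • z) = L v - τ • z := by
    simp only [v, map_sub]; abel
  have hinner : ⟪L v, z⟫ = -⟪g, v⟫ := by
    rw [← ContinuousLinearMap.adjoint_inner_right, eq_neg_of_add_eq_zero_right hstat,
      inner_neg_right, real_inner_comm]
  have hnorm : ‖L v‖ ^ 2 ≤ τ * c * ‖v‖ ^ 2 :=
    calc ‖L v‖ ^ 2 ≤ (‖L‖ * ‖v‖) ^ 2 := by gcongr; exact L.le_opNorm v
      _ = ‖L‖ ^ 2 * ‖v‖ ^ 2 := mul_pow _ _ _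
      _ ≤ τ * c * ‖v‖ ^ 2 := by gcongr
  have hexp := norm_sub_smul_sq_sub_norm_smul_sq (L v) z τ
  simp only [hLv, sub_add_cancel_left, norm_neg] at hprox_x
  refine le_of_mul_le_mul_left ?_ hτ0
  calc τ * (f xs + h (L xs + b))
      ≤ τ * f xs + 1 / 2 * ‖L v‖ ^ 2 + τ * ⟪g, v⟫ + τ * h (L x + b) := by
        rw [hinner] at hexp; linarith
    _ ≤ τ * (f xs + ⟪g, v⟫ + c / 2 * ‖v‖ ^ 2) + τ * h (L x + b) := by linarith
    _ ≤ τ * (f x + h (L x + b)) := by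
        have := mul_le_mul_of_nonneg_left (hsc x) hτ0.le
        linarith

end ProxStationary

section Matrix

variable {m n : ℕ} (A : Matrix (Fin m) (Fin n) ℝ)

lemma toEuclideanCLM_add_toLp_apply (b : Fin m → ℝ) (x : EuclideanSpace ℝ (Fin n)) (i : Fin m) :
    (A.toEuclideanLin.toContinuousLinearMap x + WithLp.toLp 2 b) i = ∑ j, A i j * x j + b i := by
  simp [Matrix.mulVec, dotProduct]

lemma adjoint_toEuclideanCLM :
    A.toEuclideanLin.toContinuousLinearMap† = A.transpose.toEuclideanLin.toContinuousLinearMap := by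
  rw [← Matrix.conjTranspose_eq_transpose_of_trivial,
    Matrix.toEuclideanLin_conjTranspose_eq_adjoint]
  rfl

end Matrix

theorem stmt_7_general (n m : ℕ) (f : EuclideanSpace ℝ (Fin n) → ℝ) (cf : ℝ) (hcf : 0 < cf)
    (hsc : ∀ x x' : EuclideanSpace ℝ (Fin n),
      f x' + (inner ℝ (gradient f x') (x - x') : ℝ) + cf / 2 * ‖x - x'‖^2 ≤ f x)
    (A : Matrix (Fin m) (Fin n) ℝ) (b : Fin m → ℝ) (lam τ : ℝ)
    (hτ0 : 0 < τ) (hτ : matOpNorm A ^ 2 / cf ≤ τ)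
    (xstar : EuclideanSpace ℝ (Fin n)) (zstar ystar : EuclideanSpace ℝ (Fin m))
    (hy : ∀ i, ystar i = (∑ j, A i j * xstar j) + b i)
    (hgrad : ∀ j, gradient f xstar j + ∑ i, zstar i * A i j = 0)
    (hprox : ∀ y : EuclideanSpace ℝ (Fin m),
      (1/2) * ‖ystar - (ystar + τ • zstar)‖^2
        + τ * lam * (Nat.card {i : Fin m | 0 < ystar i} : ℝ)
      ≤ (1/2) * ‖y - (ystar + τ • zstar)‖^2
        + τ * lam * (Nat.card {i : Fin m | 0 < y i} : ℝ)) :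
    ∀ x : EuclideanSpace ℝ (Fin n),
      f xstar + lam * (Nat.card {i : Fin m | 0 < ystar i} : ℝ)
        ≤ f x + lam * (Nat.card {i : Fin m | 0 < (∑ j, A i j * x j) + b i} : ℝ) := by
  set L := A.toEuclideanLin.toContinuousLinearMap with hL
  have hystar : ystar = L xstar + WithLp.toLp 2 b := by
    ext i; rw [hy, hL, toEuclideanCLM_add_toLp_apply]
  have hτL : ‖L‖ ^ 2 ≤ τ * cf := (div_le_iff₀ hcf).mp hτ
  have hstat : gradient f xstar + (L†) zstar = 0 := by
    ext j
    rw [hL, adjoint_toEuclideanCLM]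
    simpa [Matrix.mulVec, dotProduct, mul_comm] using hgrad j
  have hmin := isMinOn_add_comp_of_pStationary f (fun y => lam * Nat.card {i | 0 < y i}) L
    (WithLp.toLp 2 b) hτ0 hτL (hsc · xstar) hstat <| isMinOn_univ_iff.mpr fun y => by
      simpa only [hystar, mul_assoc] using hprox y
  intro x
  simpa only [hystar, hL, toEuclideanCLM_add_toLp_apply] using isMinOn_univ_iff.mp hmin x

theorem stmt_7 (n m : ℕ) (f : EuclideanSpace ℝ (Fin n) → ℝ) (cf : ℝ) (hcf : 0 < cf)
    (hdiff : Differentiable ℝ f)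
    (hsc : ∀ x x' : EuclideanSpace ℝ (Fin n),
      f x' + (inner ℝ (gradient f x') (x - x') : ℝ) + cf / 2 * ‖x - x'‖^2 ≤ f x)
    (A : Matrix (Fin m) (Fin n) ℝ) (b : Fin m → ℝ) (lam τ : ℝ)
    (hlam : 0 < lam) (hτ0 : 0 < τ) (hτ : matOpNorm A ^ 2 / cf ≤ τ)
    (xstar : EuclideanSpace ℝ (Fin n)) (zstar ystar : EuclideanSpace ℝ (Fin m))
    (hy : ∀ i, ystar i = (∑ j, A i j * xstar j) + b i)
    (hgrad : ∀ j, gradient f xstar j + ∑ i, zstar i * A i j = 0)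
    (hprox : ∀ y : EuclideanSpace ℝ (Fin m),
      (1/2) * ‖ystar - (ystar + τ • zstar)‖^2
        + τ * lam * (Nat.card {i : Fin m | 0 < ystar i} : ℝ)
      ≤ (1/2) * ‖y - (ystar + τ • zstar)‖^2
        + τ * lam * (Nat.card {i : Fin m | 0 < y i} : ℝ)) :
    ∀ x : EuclideanSpace ℝ (Fin n),
      f xstar + lam * (Nat.card {i : Fin m | 0 < ystar i} : ℝ)
        ≤ f x + lam * (Nat.card {i : Fin m | 0 < (∑ j, A i j * x j) + b i} : ℝ) :=
  stmt_7_general n m f cf hcf hsc A b lam τ hτ0 hτ xstar zstar ystar hy hgrad hprox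
end

section
/- Let y*, z* ∈ ℝ^m and τ, λ > 0 satisfy y* ∈ Prox_{τλ‖(·)₊‖₀}(y* + τz*). Then z*_i = 0 whenever y*_i ≠ 0, and z*_i ≥ 0 whenever y*_i = 0. -/
/-!
Changing a single coordinate of `y*` without moving it across `0` leaves the `‖(·)₊‖₀` term
unchanged, so optimality of `y*` says that each `y*ᵢ` is a nearest point to `cᵢ = y*ᵢ + τ z*ᵢ`
among the reals of the same sign class (`> 0`, resp. `≤ 0`) as `y*ᵢ`. If `y*ᵢ ≠ 0` it is an
interior point of its class (an open half-line), so it must equal `cᵢ`, i.e. `z*ᵢ = 0`; if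
`y*ᵢ = 0` it is the nearest point of `(-∞, 0]`, which forces `cᵢ ≥ 0`.
-/

lemma EuclideanSpace.norm_add_single_sq {ι : Type*} [Fintype ι] [DecidableEq ι]
    (v : EuclideanSpace ℝ ι) (i : ι) (a : ℝ) :
    ‖v + EuclideanSpace.single i a‖ ^ 2 = ‖v‖ ^ 2 + 2 * a * v i + a ^ 2 := by
  rw [norm_add_sq_real, EuclideanSpace.inner_single_right, PiLp.norm_single, Real.norm_eq_abs,
    sq_abs, conj_trivial]
  ring

lemma apply_sub_sq_le_of_forall_le {ι : Type*} [Fintype ι] [DecidableEq ι] {c lam : ℝ} (hc : 0 < c)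
    {x w : EuclideanSpace ℝ ι}
    (hmin : ∀ y : EuclideanSpace ℝ ι,
      c * ‖x - w‖ ^ 2 + lam * (Nat.card {i | 0 < x i} : ℝ)
        ≤ c * ‖y - w‖ ^ 2 + lam * (Nat.card {i | 0 < y i} : ℝ))
    (i : ι) {t : ℝ} (ht : 0 < t ↔ 0 < x i) :
    (x i - w i) ^ 2 ≤ (t - w i) ^ 2 := by
  set y := x + EuclideanSpace.single i (t - x i)
  have hpos : {j | 0 < y j} = {j | 0 < x j} := by
    ext j
    by_cases hj : j = i
    · subst hj; simp [y, ht]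
    · simp [y, hj]
  have hnorm : ‖y - w‖ ^ 2 = ‖x - w‖ ^ 2 + 2 * (t - x i) * (x i - w i) + (t - x i) ^ 2 := by
    rw [show y - w = (x - w) + EuclideanSpace.single i (t - x i) by simp only [y]; abel,
      EuclideanSpace.norm_add_single_sq, PiLp.sub_apply]
  have := hmin y
  rw [hpos, hnorm] at this
  nlinarith

lemma eq_zero_of_forall_sameSign_sq_le {y d : ℝ} (hy : y ≠ 0)
    (h : ∀ t, (0 < t ↔ 0 < y) → d ^ 2 ≤ (t - (y + d)) ^ 2) : d = 0 := by
  by_cases hsign : 0 < y + d ↔ 0 < y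
  · have := h (y + d) hsign
    rwa [sub_self, zero_pow two_ne_zero, sq_nonpos_iff] at this
  · -- `y + d` lies across `0` from `y`, so `y / 2` is strictly closer to it than `y`
    have := h (y / 2) (by constructor <;> intro <;> linarith)
    rcases hy.lt_or_gt with hy | hy
    · have hyd : 0 < y + d := by
        by_contra hyd
        exact hsign (iff_of_false hyd hy.not_gt)
      nlinarith
    · have hyd : y + d ≤ 0 := by
        by_contra hyd
        exact hsign (iff_of_true (not_le.mp hyd) hy)
      nlinarith

lemma nonneg_of_forall_nonpos_sq_le {d : ℝ} (h : ∀ t ≤ 0, d ^ 2 ≤ (t - d) ^ 2) : 0 ≤ d := by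
  by_contra! hd
  have := h d hd.le
  rw [sub_self, zero_pow two_ne_zero, sq_nonpos_iff] at this
  exact hd.ne this

theorem stmt_10_general (m : ℕ) (τ lam : ℝ) (hτ : 0 < τ)
    (ystar zstar : EuclideanSpace ℝ (Fin m))
    (hprox : ∀ y : EuclideanSpace ℝ (Fin m),
      (1 / (2 * τ)) * ‖ystar - (ystar + τ • zstar)‖^2
        + lam * (Nat.card {i : Fin m | 0 < ystar i} : ℝ)
      ≤ (1 / (2 * τ)) * ‖y - (ystar + τ • zstar)‖^2
        + lam * (Nat.card {i : Fin m | 0 < y i} : ℝ)) :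
    ∀ i, (ystar i ≠ 0 → zstar i = 0) ∧ (ystar i = 0 → 0 ≤ zstar i) := by
  intro i
  have hnear : ∀ t, (0 < t ↔ 0 < ystar i) →
      (τ * zstar i) ^ 2 ≤ (t - (ystar i + τ * zstar i)) ^ 2 := by
    intro t ht
    have := apply_sub_sq_le_of_forall_le (by positivity : 0 < 1 / (2 * τ)) hprox i ht
    simpa [neg_sq] using this
  refine ⟨fun hy => ?_, fun hy => ?_⟩
  · exact (mul_eq_zero.mp (eq_zero_of_forall_sameSign_sq_le hy hnear)).resolve_left hτ.ne'
  · refine nonneg_of_mul_nonneg_right ?_ hτ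
    refine nonneg_of_forall_nonpos_sq_le fun t ht => ?_
    simpa [hy] using hnear t (by simpa [hy] using ht)

theorem stmt_10 (m : ℕ) (τ lam : ℝ) (hτ : 0 < τ) (hlam : 0 < lam)
    (ystar zstar : EuclideanSpace ℝ (Fin m))
    (hprox : ∀ y : EuclideanSpace ℝ (Fin m),
      (1 / (2 * τ)) * ‖ystar - (ystar + τ • zstar)‖^2
        + lam * (Nat.card {i : Fin m | 0 < ystar i} : ℝ)
      ≤ (1 / (2 * τ)) * ‖y - (ystar + τ • zstar)‖^2
        + lam * (Nat.card {i : Fin m | 0 < y i} : ℝ)) :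
    ∀ i, (ystar i ≠ 0 → zstar i = 0) ∧ (ystar i = 0 → 0 ≤ zstar i) :=
  stmt_10_general m τ lam hτ ystar zstar hprox
end
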